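/- Let H^J be a weighted constraint graph (edge potential J, with J(i,j) = -infinity for hard constraints) without self-loops, having at least one hard constraint. If for some edge {i,j} of H^J every H^J-coloring sigma of the supergraph G_{ij} satisfies J(sigma_i, sigma_j) + J(sigma_{i'}, sigma_{j'}) = J(sigma_{i'}, sigma_j) + J(sigma_i, sigma_{j'}), then every H^J-coloring sigma of the double-duplicate graph G_{ij}^2 satisfies J(sigma_{i'}, sigma_{j'}) + J(sigma_{i''}, sigma_{j''}) = J(sigma_{i''}, sigma_{j'}) + J(sigma_{i'}, sigma_{j''}). -/

import Mathlib

/-- Adjacency of the supergraph `G_{ij}` of the constraint graph with compatibility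
relation `compat`: the duplicates `i' = inr false`, `j' = inr true` have the same
neighborhoods as `i`, `j`, except that the edge `{i', j'}` is absent. -/
def GijAdj {q : ℕ} (compat : Fin q → Fin q → Prop) (i j : Fin q) :
    (Fin q ⊕ Bool) → (Fin q ⊕ Bool) → Prop
  | Sum.inl a, Sum.inl b => compat a b
  | Sum.inl a, Sum.inr c => compat (if c then j else i) a
  | Sum.inr c, Sum.inl a => compat (if c then j else i) a
  | Sum.inr _, Sum.inr _ => False

/-- Adjacency of the double-duplicate graph `G_{ij}²`: two duplicates of `i`
(`inr (false, ·)`) and two duplicates of `j` (`inr (true, ·)`), each with the same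
neighborhood as the original, and no edges among the four duplicates. -/
def Gij2Adj {q : ℕ} (compat : Fin q → Fin q → Prop) (i j : Fin q) :
    (Fin q ⊕ (Bool × Bool)) → (Fin q ⊕ (Bool × Bool)) → Prop
  | Sum.inl a, Sum.inl b => compat a b
  | Sum.inl a, Sum.inr c => compat (if c.1 then j else i) a
  | Sum.inr c, Sum.inl a => compat (if c.1 then j else i) a
  | Sum.inr _, Sum.inr _ => False

/-! Each choice of one duplicate of `i` and one of `j` embeds `G_{ij}` into `G_{ij}²`, so the
hypothesis applies to the four corresponding restrictions of `σ`. In the alternating sum of these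
four identities the terms `J(σ_i, σ_j)`, `J(σ_{i*}, σ_j)` and `J(σ_i, σ_{j*})` cancel, leaving the
claim. -/

def gijToGij2 {q : ℕ} (bi bj : Bool) : Fin q ⊕ Bool → Fin q ⊕ (Bool × Bool)
  | Sum.inl a => Sum.inl a
  | Sum.inr false => Sum.inr (false, bi)
  | Sum.inr true => Sum.inr (true, bj)

theorem gij2Adj_gijToGij2 {q : ℕ} {compat : Fin q → Fin q → Prop} {i j : Fin q} (bi bj : Bool)
    {a b : Fin q ⊕ Bool} (h : GijAdj compat i j a b) :
    Gij2Adj compat i j (gijToGij2 bi bj a) (gijToGij2 bi bj b) := by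
  rcases a with a | _ | _ <;> rcases b with b | _ | _ <;> exact h

theorem stmt19_general (q : ℕ) (compat : Fin q → Fin q → Prop)
    (J : Fin q → Fin q → ℝ)
    (i j : Fin q)
    (hyp : ∀ σ : (Fin q ⊕ Bool) → Fin q,
      (∀ a b, GijAdj compat i j a b → compat (σ a) (σ b)) →
      J (σ (Sum.inl i)) (σ (Sum.inl j)) + J (σ (Sum.inr false)) (σ (Sum.inr true)) =
        J (σ (Sum.inr false)) (σ (Sum.inl j)) + J (σ (Sum.inl i)) (σ (Sum.inr true)))
    (σ : (Fin q ⊕ (Bool × Bool)) → Fin q)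
    (hσ : ∀ a b, Gij2Adj compat i j a b → compat (σ a) (σ b)) :
    J (σ (Sum.inr (false, false))) (σ (Sum.inr (true, false))) +
        J (σ (Sum.inr (false, true))) (σ (Sum.inr (true, true))) =
      J (σ (Sum.inr (false, true))) (σ (Sum.inr (true, false))) +
        J (σ (Sum.inr (false, false))) (σ (Sum.inr (true, true))) := by
  have restrict : ∀ bi bj : Bool,
      J (σ (Sum.inl i)) (σ (Sum.inl j)) + J (σ (Sum.inr (false, bi))) (σ (Sum.inr (true, bj))) =
        J (σ (Sum.inr (false, bi))) (σ (Sum.inl j)) +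
          J (σ (Sum.inl i)) (σ (Sum.inr (true, bj))) := fun bi bj =>
    hyp (σ ∘ gijToGij2 bi bj) fun _ _ h => hσ _ _ (gij2Adj_gijToGij2 bi bj h)
  linarith [restrict false false, restrict true true, restrict true false, restrict false true]

/-- For a loopless weighted constraint graph `H^J` with a hard constraint: if for some
edge `{i,j}` every `H^J`-coloring `σ` of `G_{ij}` satisfies
`J(σ_i,σ_j) + J(σ_{i'},σ_{j'}) = J(σ_{i'},σ_j) + J(σ_i,σ_{j'})`, then every
`H^J`-coloring of `G_{ij}²` satisfies
`J(σ_{i'},σ_{j'}) + J(σ_{i''},σ_{j''}) = J(σ_{i''},σ_{j'}) + J(σ_{i'},σ_{j''})`. -/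
theorem stmt19 (q : ℕ) (compat : Fin q → Fin q → Prop) (hsymm : Symmetric compat)
    (hloopless : ∀ a : Fin q, ¬ compat a a)
    (hhard : ∃ a b : Fin q, ¬ compat a b)
    (J : Fin q → Fin q → ℝ) (hJsym : ∀ a b, J a b = J b a)
    (i j : Fin q) (hij : compat i j)
    (hyp : ∀ σ : (Fin q ⊕ Bool) → Fin q,
      (∀ a b, GijAdj compat i j a b → compat (σ a) (σ b)) →
      J (σ (Sum.inl i)) (σ (Sum.inl j)) + J (σ (Sum.inr false)) (σ (Sum.inr true)) =
        J (σ (Sum.inr false)) (σ (Sum.inl j)) + J (σ (Sum.inl i)) (σ (Sum.inr true)))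
    (σ : (Fin q ⊕ (Bool × Bool)) → Fin q)
    (hσ : ∀ a b, Gij2Adj compat i j a b → compat (σ a) (σ b)) :
    J (σ (Sum.inr (false, false))) (σ (Sum.inr (true, false))) +
        J (σ (Sum.inr (false, true))) (σ (Sum.inr (true, true))) =
      J (σ (Sum.inr (false, true))) (σ (Sum.inr (true, false))) +
        J (σ (Sum.inr (false, false))) (σ (Sum.inr (true, true))) :=
  stmt19_general q compat J i j hyp σ hσ
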